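/- arXiv:1204.6684 — 2 statements merged into one kernel-verified Lean document; each statement's English description precedes it below -/
import Mathlib

section
/- Let M be a set, X an abelian group, Γ : M → X a function, and suppose there exists m₀ ∈ M with Γ(m₀) = 0 and an integer g ≥ 1 with Γ_*(M^{g-1}) = Γ_*(M^g). Then the subgroup of X generated by the image of Γ equals the set { s - t : s, t ∈ Γ_*(M^{g-1}) }; in particular every element of this subgroup is a difference of two sums of at most g-1 values of Γ. -/
/-- The set of sums of `k` values of `Γ : M → X`. -/
def sumsOf {M X : Type*} [AddCommMonoid X] (Γ : M → X) (k : ℕ) : Set X :=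
  {x | ∃ m : Fin k → M, x = ∑ i, Γ (m i)}

lemma sumsOf_add_mem {M X : Type*} [AddCommMonoid X] (Γ : M → X) {a b : ℕ} {x y : X}
    (hx : x ∈ sumsOf Γ a) (hy : y ∈ sumsOf Γ b) : x + y ∈ sumsOf Γ (a + b) := by
  obtain ⟨m, rfl⟩ := hx
  obtain ⟨n, rfl⟩ := hy
  exact ⟨Fin.append m n, by
    rw [Fin.sum_univ_add]
    simp [Fin.append_left, Fin.append_right]⟩

lemma zero_mem_sumsOf {M X : Type*} [AddCommMonoid X] (Γ : M → X)
    (m₀ : M) (hm₀ : Γ m₀ = 0) (k : ℕ) : (0 : X) ∈ sumsOf Γ k :=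
  ⟨fun _ => m₀, by simp [hm₀]⟩

lemma sumsOf_mono {M X : Type*} [AddCommMonoid X] (Γ : M → X)
    (m₀ : M) (hm₀ : Γ m₀ = 0) {a b : ℕ} (hab : a ≤ b) :
    sumsOf Γ a ⊆ sumsOf Γ b := by
  intro x hx
  obtain ⟨c, rfl⟩ := Nat.exists_eq_add_of_le hab
  have := sumsOf_add_mem Γ hx (zero_mem_sumsOf Γ m₀ hm₀ c)
  simpa using this

lemma sumsOf_stab {M X : Type*} [AddCommMonoid X] (Γ : M → X)
    (m₀ : M) (hm₀ : Γ m₀ = 0) (g : ℕ) (hg : 1 ≤ g)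
    (hstab : sumsOf Γ (g - 1) = sumsOf Γ g) :
    ∀ k, g - 1 ≤ k → sumsOf Γ k = sumsOf Γ (g - 1) := by
  intro k hk
  induction k, hk using Nat.le_induction with
  | base => rfl
  | succ k hk ih =>
    apply Set.Subset.antisymm
    · intro x hx
      obtain ⟨m, rfl⟩ := hx
      rw [Fin.sum_univ_succ]
      have hrest : (∑ i : Fin k, Γ (m i.succ)) ∈ sumsOf Γ (g - 1) := by
        rw [← ih]; exact ⟨fun i => m i.succ, rfl⟩
      have h1 : Γ (m 0) ∈ sumsOf Γ 1 := ⟨fun _ => m 0, by simp⟩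
      have := sumsOf_add_mem Γ h1 hrest
      rw [show 1 + (g - 1) = g from by omega] at this
      rwa [hstab]
    · exact sumsOf_mono Γ m₀ hm₀ (by omega)

/-- If `Γ(m₀) = 0` and `Γ_*(M^{g-1}) = Γ_*(M^g)`, then the subgroup of `X`
generated by the image of `Γ` equals `{ s - t : s, t ∈ Γ_*(M^{g-1}) }`. -/
theorem stmt_4 {M X : Type*} [AddCommGroup X] (Γ : M → X)
    (m₀ : M) (hm₀ : Γ m₀ = 0) (g : ℕ) (hg : 1 ≤ g)
    (hstab : sumsOf Γ (g - 1) = sumsOf Γ g) :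
    (AddSubgroup.closure (Set.range Γ) : Set X) =
      {x | ∃ s ∈ sumsOf Γ (g - 1), ∃ t ∈ sumsOf Γ (g - 1), x = s - t} := by
  have hstab' := sumsOf_stab Γ m₀ hm₀ g hg hstab
  have hshrink : ∀ k, sumsOf Γ k ⊆ sumsOf Γ (g - 1) := by
    intro k
    rcases le_or_gt k (g - 1) with h | h
    · exact sumsOf_mono Γ m₀ hm₀ h
    · rw [hstab' k (le_of_lt h)]
  have h0 : (0 : X) ∈ sumsOf Γ (g - 1) := zero_mem_sumsOf Γ m₀ hm₀ _
  let S : AddSubgroup X :=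
    { carrier := {x | ∃ s ∈ sumsOf Γ (g - 1), ∃ t ∈ sumsOf Γ (g - 1), x = s - t}
      zero_mem' := ⟨0, h0, 0, h0, by simp⟩
      add_mem' := by
        rintro x y ⟨s, hs, t, ht, rfl⟩ ⟨s', hs', t', ht', rfl⟩
        exact ⟨s + s', hshrink _ (sumsOf_add_mem Γ hs hs'),
          t + t', hshrink _ (sumsOf_add_mem Γ ht ht'), by abel⟩
      neg_mem' := by
        rintro x ⟨s, hs, t, ht, rfl⟩
        exact ⟨t, ht, s, hs, by abel⟩ }
  apply Set.Subset.antisymm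
  · have : AddSubgroup.closure (Set.range Γ) ≤ S := by
      rw [AddSubgroup.closure_le]
      rintro x ⟨m, rfl⟩
      exact ⟨Γ m, hshrink 1 ⟨fun _ => m, by simp⟩, 0, h0, by simp⟩
    exact this
  · rintro x ⟨s, hs, t, ht, rfl⟩
    have hmem : ∀ y ∈ sumsOf Γ (g - 1), y ∈ AddSubgroup.closure (Set.range Γ) := by
      rintro y ⟨m, rfl⟩
      exact AddSubgroup.sum_mem _ fun i _ => AddSubgroup.subset_closure ⟨m i, rfl⟩
    exact sub_mem (hmem s hs) (hmem t ht)
end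

section
/- Let M be a set, X an abelian group, Γ : M → X with Γ(m₀) = 0 for some m₀, and suppose there is g such that Γ_*(M^{g-1}) = Γ_*(M^g). Define P = subgroup generated by Γ(M). Then P is 'finite dimensional in the Roitman sense' in the following abstract form: there exists k (namely k = 2g-2) and a function Γ' : M^k → X (given by Γ'(m₁,...,m_{2g-2}) = ∑_{i ≤ g-1} Γ(m_i) - ∑_{g ≤ i ≤ 2g-2} Γ(m_i)) such that P ⊆ Γ'(M^{2g-2}). -/
open Pointwise

namespace AddSubmonoid

variable {X : Type*} [AddCommMonoid X]

theorem add_mem_of_mem_closure {S T : Set X} (hST : ∀ s ∈ S, ∀ t ∈ T, s + t ∈ S) {p : X}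
    (hp : p ∈ closure T) : ∀ s ∈ S, s + p ∈ S := by
  induction hp using closure_induction with
  | mem t ht => exact fun s hs => hST s hs t ht
  | zero => simp
  | add p q _ _ hp hq => exact fun s hs => add_assoc s p q ▸ hq _ (hp s hs)

end AddSubmonoid

namespace AddSubgroup

variable {X : Type*} [AddCommGroup X]

theorem exists_sub_of_mem_closure {T : Set X} {x : X} (hx : x ∈ closure T) :
    ∃ p ∈ AddSubmonoid.closure T, ∃ q ∈ AddSubmonoid.closure T, p - q = x := by
  rw [← mem_toAddSubmonoid, closure_toAddSubmonoid, AddSubmonoid.closure_union,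
    AddSubmonoid.mem_sup] at hx
  obtain ⟨p, hp, r, hr, rfl⟩ := hx
  exact ⟨p, hp, -r, (AddSubmonoid.mem_closure_neg T r).1 hr, sub_neg_eq_add p r⟩

theorem closure_subset_sub_of_add_mem {S T : Set X} (hS : S.Nonempty)
    (hST : ∀ s ∈ S, ∀ t ∈ T, s + t ∈ S) : (closure T : Set X) ⊆ S - S := by
  intro x hx
  obtain ⟨p, hp, q, hq, rfl⟩ := exists_sub_of_mem_closure hx
  obtain ⟨s, hs⟩ := hS
  exact ⟨s + p, AddSubmonoid.add_mem_of_mem_closure hST hp s hs,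
    s + q, AddSubmonoid.add_mem_of_mem_closure hST hq s hs, add_sub_add_left_eq_sub p q s⟩

end AddSubgroup

section sumsOf

variable {M X : Type*} [AddCommMonoid X] (Γ : M → X)

theorem sumsOf_nonempty [Nonempty M] (k : ℕ) : (sumsOf Γ k).Nonempty :=
  ⟨_, fun _ => Classical.arbitrary M, rfl⟩

theorem add_mem_sumsOf_succ {k : ℕ} {x : X} (hx : x ∈ sumsOf Γ k) (m : M) :
    x + Γ m ∈ sumsOf Γ (k + 1) := by
  obtain ⟨n, rfl⟩ := hx
  exact ⟨Fin.snoc n m, by simp [Fin.sum_univ_castSucc]⟩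

end sumsOf

theorem stmt_16_general {M X : Type*} [AddCommGroup X] (Γ : M → X)
    (m₀ : M) (g : ℕ) (hg : 1 ≤ g)
    (hstab : sumsOf Γ (g - 1) = sumsOf Γ g) :
    ∀ x ∈ AddSubgroup.closure (Set.range Γ),
      ∃ m m' : Fin (g - 1) → M, x = ∑ i, Γ (m i) - ∑ i, Γ (m' i) := by
  obtain ⟨k, rfl⟩ : ∃ k, g = k + 1 := ⟨g - 1, by omega⟩
  rw [Nat.add_sub_cancel] at hstab ⊢
  have : Nonempty M := ⟨m₀⟩
  intro x hx
  obtain ⟨_, ⟨m, rfl⟩, _, ⟨m', rfl⟩, rfl⟩ :=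
    AddSubgroup.closure_subset_sub_of_add_mem (sumsOf_nonempty Γ k)
      (by rintro s hs _ ⟨m, rfl⟩; exact hstab ▸ add_mem_sumsOf_succ Γ hs m) hx
  exact ⟨m, m', rfl⟩

/-- Lemma 1 of the paper in abstract form: if `Γ(m₀) = 0` for some `m₀` and
`Γ_*(M^{g-1}) = Γ_*(M^g)`, then the subgroup generated by the image of `Γ` is
contained in the image of `Γ' : M^{2g-2} → X`,
`Γ'(m, m') = ∑_{i ≤ g-1} Γ(m_i) - ∑_{i ≤ g-1} Γ(m'_i)`:
it is finite dimensional in the Roitman sense. -/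
theorem stmt_16 {M X : Type*} [AddCommGroup X] (Γ : M → X)
    (m₀ : M) (hm₀ : Γ m₀ = 0) (g : ℕ) (hg : 1 ≤ g)
    (hstab : sumsOf Γ (g - 1) = sumsOf Γ g) :
    ∀ x ∈ AddSubgroup.closure (Set.range Γ),
      ∃ m m' : Fin (g - 1) → M, x = ∑ i, Γ (m i) - ∑ i, Γ (m' i) :=
  stmt_16_general Γ m₀ g hg hstab
end
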